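/- arXiv:1511.07489 — 2 statements merged into one kernel-verified Lean document; each statement's English description precedes it below -/
import Mathlib

section
/- Let f(x) = x⁴ + px³ + qx² + rx + s with D = 0, D1 = 0, 3p² - 8q > 0, and p³ - 4pq + 8r ≠ 0. Then f has a real triple root α and a real simple root β, and β - α = -3(p³ - 4pq + 8r)/(3p² - 8q); in particular β > α iff p³ - 4pq + 8r < 0. -/
/-!
The substitution `x = y - p/4` turns `f` into `y⁴ + P y² + Q y + R` and leaves `D` and `D1`
unchanged. The depressed quartic `(y - a)³ (y + 3a)` has `P = -6a²`, `Q = 8a³`, `R = -3a⁴`.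
Conversely, `D = D1 = 0` force `Q² (8P³ + 27Q²)² = 0`; as `Q ≠ 0`, the point `(P, Q)` lies on the
cusp `8P³ + 27Q² = 0`, parametrised by `a = -3Q/(4P)`, and then `D1 = 0` gives `R = -P²/12 = -3a⁴`.
So `α = a - p/4`, `β = -3a - p/4`, and `β - α = -4a = 3Q/P` has the sign of `-Q`.
-/

open Polynomial

section Depressed

variable {K : Type*} [Field K] [CharZero K]

-- `D` and `D1` of the depressed quartic `y⁴ + P y² + Q y + R`, i.e. at `(p, q, r, s) = (0, P, Q, R)`.
def depressedQuarticDisc (P Q R : K) : K :=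
  16*P^4*R - 4*P^3*Q^2 - 128*P^2*R^2 + 144*P*Q^2*R - 27*Q^4 + 256*R^3

def depressedQuarticD1 (P Q R : K) : K :=
  -4*P^3 + 16*P*R - 18*Q^2

variable {P Q R : K}

theorem eight_mul_cube_add_sq_eq_zero_of_disc_eq_zero (hD : depressedQuarticDisc P Q R = 0)
    (hD1 : depressedQuarticD1 P Q R = 0) (hQ : Q ≠ 0) : 8*P^3 + 27*Q^2 = 0 := by
  have h : Q^2 * (8*P^3 + 27*Q^2)^2 = 0 := by
    unfold depressedQuarticDisc depressedQuarticD1 at *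
    linear_combination 2*P^3 * hD -
      (18*P^3*Q^2 + 81/2*Q^4 - 8*P^4*R + 36*P*Q^2*R + 32*P^2*R^2) * hD1
  simpa [hQ] using h

theorem exists_eq_neg_six_mul_sq_and_eq_eight_mul_cube (hPQ : 8*P^3 + 27*Q^2 = 0) (hQ : Q ≠ 0) :
    ∃ a : K, a ≠ 0 ∧ P = -6*a^2 ∧ Q = 8*a^3 := by
  have hP : P ≠ 0 := by rintro rfl; exact hQ (by simpa using hPQ)
  refine ⟨-3*Q/(4*P), by simp [hP, hQ], ?_, ?_⟩
  · field_simp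
    linear_combination 2*hPQ
  · field_simp
    linear_combination 8*hPQ

theorem exists_depressed_quartic_eq_triple_root (hD : depressedQuarticDisc P Q R = 0)
    (hD1 : depressedQuarticD1 P Q R = 0) (hQ : Q ≠ 0) :
    ∃ a : K, a ≠ 0 ∧ P = -6*a^2 ∧ Q = 8*a^3 ∧ R = -3*a^4 := by
  obtain ⟨a, ha, rfl, rfl⟩ := exists_eq_neg_six_mul_sq_and_eq_eight_mul_cube
    (eight_mul_cube_add_sq_eq_zero_of_disc_eq_zero hD hD1 hQ) hQ
  refine ⟨a, ha, rfl, rfl, ?_⟩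
  have : a^2 * (R + 3*a^4) = 0 := by
    unfold depressedQuarticD1 at hD1
    linear_combination -hD1/96
  linear_combination (mul_eq_zero.mp this).resolve_left (pow_ne_zero 2 ha)

end Depressed

theorem quartic_eq_sub_C_pow_three_mul_sub_C {R : Type*} [CommRing R] {p q r s α β : R}
    (hp : p = -(3*α + β)) (hq : q = 3*α^2 + 3*α*β) (hr : r = -(α^3 + 3*α^2*β))
    (hs : s = α^3*β) :
    (X ^ 4 + C p * X ^ 3 + C q * X ^ 2 + C r * X + C s : R[X]) = (X - C α) ^ 3 * (X - C β) := by
  subst hp hq hr hs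
  simp only [map_add, map_mul, map_neg, map_pow, map_ofNat]
  ring

theorem quartic_triple_and_single_root_general (p q r s : ℝ)
    (hD : (18*p^3*r*q*s - 4*q^3*p^2*s + 144*s*r^2*q + q^2*p^2*r^2 - 192*p*r*s^2 + 144*q*p^2*s^2 + 18*p*r^3*q - 4*p^3*r^3 - 128*q^2*s^2 + 16*q^4*s - 4*q^3*r^2 - 27*p^4*s^2 - 80*p*r*q^2*s - 6*p^2*r^2*s + 256*s^3 - 27*r^4) = 0)
    (hD1 : (p^2*q^2 - 3*r*p^3 - 6*p^2*s - 4*q^3 + 14*p*q*r + 16*s*q - 18*r^2) = 0)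
    (hp : p ^ 3 - 4 * p * q + 8 * r ≠ 0) :
    ∃ α β : ℝ, α ≠ β ∧
      (X ^ 4 + C p * X ^ 3 + C q * X ^ 2 + C r * X + C s : ℝ[X]) =
        (X - C α) ^ 3 * (X - C β) ∧
      β - α = -3 * (p ^ 3 - 4 * p * q + 8 * r) / (3 * p ^ 2 - 8 * q) ∧
      (β > α ↔ p ^ 3 - 4 * p * q + 8 * r < 0) := by
  obtain ⟨a, ha, hP, hQ, hR⟩ := exists_depressed_quartic_eq_triple_root
    (P := q - 3*p^2/8) (Q := r - p*q/2 + p^3/8) (R := s - p*r/4 + p^2*q/16 - 3*p^4/256)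
    (by unfold depressedQuarticDisc; linear_combination hD)
    (by unfold depressedQuarticD1; linear_combination hD1)
    (by contrapose! hp; linear_combination 8*hp)
  have hQ' : p ^ 3 - 4 * p * q + 8 * r = 64 * a^3 := by linear_combination 8*hQ
  have hP' : 3 * p ^ 2 - 8 * q = 48 * a^2 := by linear_combination -8*hP
  refine ⟨a - p/4, -3*a - p/4, ?_, ?_, ?_, ?_⟩
  · contrapose! ha; linarith
  · apply quartic_eq_sub_C_pow_three_mul_sub_C
    · ring
    · linear_combination hP
    · linear_combination hQ + p/2*hP
    · linear_combination hR + p/4*hQ + p^2/16*hP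
  · rw [hQ', hP']
    field_simp
    ring
  · have hsign : a ^ 3 < 0 ↔ a < 0 := Odd.pow_neg_iff (by decide)
    rw [hQ']
    constructor <;> intro h
    · linarith [hsign.2 (by linarith)]
    · linarith [hsign.1 (by linarith)]

open Polynomial in
theorem quartic_triple_and_single_root (p q r s : ℝ)
    (hD : (18*p^3*r*q*s - 4*q^3*p^2*s + 144*s*r^2*q + q^2*p^2*r^2 - 192*p*r*s^2 + 144*q*p^2*s^2 + 18*p*r^3*q - 4*p^3*r^3 - 128*q^2*s^2 + 16*q^4*s - 4*q^3*r^2 - 27*p^4*s^2 - 80*p*r*q^2*s - 6*p^2*r^2*s + 256*s^3 - 27*r^4) = 0)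
    (hD1 : (p^2*q^2 - 3*r*p^3 - 6*p^2*s - 4*q^3 + 14*p*q*r + 16*s*q - 18*r^2) = 0)
    (hpq : 3 * p ^ 2 - 8 * q > 0)
    (hp : p ^ 3 - 4 * p * q + 8 * r ≠ 0) :
    ∃ α β : ℝ, α ≠ β ∧
      (X ^ 4 + C p * X ^ 3 + C q * X ^ 2 + C r * X + C s : ℝ[X]) =
        (X - C α) ^ 3 * (X - C β) ∧
      β - α = -3 * (p ^ 3 - 4 * p * q + 8 * r) / (3 * p ^ 2 - 8 * q) ∧
      (β > α ↔ p ^ 3 - 4 * p * q + 8 * r < 0) :=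
  quartic_triple_and_single_root_general p q r s hD hD1 hp
end

section
/- Let f(x) = x⁴ + px³ + qx² + rx + s. Then f has a quadruple real root if and only if D = 0, D1 = 0, and 3p² - 8q = 0, where D is the discriminant and D1 = p²q² - 3rp³ - 6p²s - 4q³ + 14pqr + 16sq - 18r²; in that case the root is -p/4. -/
/-! Comparing coefficients, `f = (X - α)⁴` means `(p, q, r, s) = (-4α, 6α², -4α³, α⁴)`, so `α = -p/4`,
and all three expressions vanish at such coefficients. Conversely, once `8q = 3p²`, the expression
`D₁` collapses to `-(9/128)(p³ - 16r)²` and then `D` to `(256s - p⁴)³ / 2¹⁶`, which pins down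
`r = p³/16` and `s = p⁴/256`: exactly the coefficients of `(X + p/4)⁴`. -/

open Polynomial

section CommRing

variable {R : Type*} [CommRing R]

theorem X_sub_C_pow_four (a : R) :
    (X - C a) ^ 4 =
      X ^ 4 + C (-4 * a) * X ^ 3 + C (6 * a ^ 2) * X ^ 2 + C (-4 * a ^ 3) * X + C (a ^ 4) := by
  simp only [map_neg, map_mul, map_pow, map_ofNat]
  ring

theorem monic_quartic_eq_X_sub_C_pow_four_iff {p q r s a : R} :
    X ^ 4 + C p * X ^ 3 + C q * X ^ 2 + C r * X + C s = (X - C a) ^ 4 ↔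
      p = -4 * a ∧ q = 6 * a ^ 2 ∧ r = -4 * a ^ 3 ∧ s = a ^ 4 := by
  constructor
  · intro h
    rw [X_sub_C_pow_four] at h
    have hcoeff n := congrArg (coeff · n) h
    simp only [coeff_add, coeff_C_mul_X_pow, coeff_C_mul_X, coeff_X_pow, coeff_C] at hcoeff
    exact ⟨by simpa using hcoeff 3, by simpa using hcoeff 2, by simpa using hcoeff 1,
      by simpa using hcoeff 0⟩
  · rintro ⟨rfl, rfl, rfl, rfl⟩
    exact (X_sub_C_pow_four a).symm

def quarticDisc (p q r s : R) : R :=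
  18*p^3*r*q*s - 4*q^3*p^2*s + 144*s*r^2*q + q^2*p^2*r^2 - 192*p*r*s^2 + 144*q*p^2*s^2
    + 18*p*r^3*q - 4*p^3*r^3 - 128*q^2*s^2 + 16*q^4*s - 4*q^3*r^2 - 27*p^4*s^2 - 80*p*r*q^2*s
    - 6*p^2*r^2*s + 256*s^3 - 27*r^4

def quarticDisc₁ (p q r s : R) : R :=
  p^2*q^2 - 3*r*p^3 - 6*p^2*s - 4*q^3 + 14*p*q*r + 16*s*q - 18*r^2

end CommRing

section Field

variable {K : Type*} [Field K] [CharZero K]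

theorem quarticDisc₁_three_mul_sq_div_eight (p r s : K) :
    quarticDisc₁ p (3 * p ^ 2 / 8) r s = -(9 / 128) * (p ^ 3 - 16 * r) ^ 2 := by
  unfold quarticDisc₁
  ring

theorem quarticDisc_three_mul_sq_div_eight (p s : K) :
    quarticDisc p (3 * p ^ 2 / 8) (p ^ 3 / 16) s = (256 * s - p ^ 4) ^ 3 / 65536 := by
  unfold quarticDisc
  ring

theorem coeffs_eq_of_quarticDisc_eq_zero {p q r s : K} (hD : quarticDisc p q r s = 0)
    (hD₁ : quarticDisc₁ p q r s = 0) (hq : 3 * p ^ 2 - 8 * q = 0) :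
    q = 3 * p ^ 2 / 8 ∧ r = p ^ 3 / 16 ∧ s = p ^ 4 / 256 := by
  obtain rfl : q = 3 * p ^ 2 / 8 := by linear_combination -hq / 8
  have hr : p ^ 3 - 16 * r = 0 := by
    rw [quarticDisc₁_three_mul_sq_div_eight] at hD₁
    simpa using hD₁
  obtain rfl : r = p ^ 3 / 16 := by linear_combination -hr / 16
  have hs : 256 * s - p ^ 4 = 0 := by
    rw [quarticDisc_three_mul_sq_div_eight] at hD
    simpa using hD
  exact ⟨rfl, rfl, by linear_combination hs / 256⟩

end Field

theorem quartic_quadruple_root_iff (p q r s : ℝ) :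
    ((∃ α : ℝ, (X ^ 4 + C p * X ^ 3 + C q * X ^ 2 + C r * X + C s : ℝ[X]) =
        (X - C α) ^ 4) ↔
      ((18*p^3*r*q*s - 4*q^3*p^2*s + 144*s*r^2*q + q^2*p^2*r^2 - 192*p*r*s^2 + 144*q*p^2*s^2 + 18*p*r^3*q - 4*p^3*r^3 - 128*q^2*s^2 + 16*q^4*s - 4*q^3*r^2 - 27*p^4*s^2 - 80*p*r*q^2*s - 6*p^2*r^2*s + 256*s^3 - 27*r^4) = 0 ∧ (p^2*q^2 - 3*r*p^3 - 6*p^2*s - 4*q^3 + 14*p*q*r + 16*s*q - 18*r^2) = 0 ∧ 3 * p ^ 2 - 8 * q = 0)) ∧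
    (∀ α : ℝ, (X ^ 4 + C p * X ^ 3 + C q * X ^ 2 + C r * X + C s : ℝ[X]) =
        (X - C α) ^ 4 → α = -p / 4) := by
  refine ⟨⟨?_, ?_⟩, ?_⟩
  · rintro ⟨α, h⟩
    obtain ⟨rfl, rfl, rfl, rfl⟩ := monic_quartic_eq_X_sub_C_pow_four_iff.mp h
    exact ⟨by ring, by ring, by ring⟩
  · rintro ⟨hD, hD₁, hq⟩
    obtain ⟨rfl, rfl, rfl⟩ := coeffs_eq_of_quarticDisc_eq_zero (r := r) (s := s) hD hD₁ hq
    exact ⟨-p / 4, monic_quartic_eq_X_sub_C_pow_four_iff.mpr ⟨by ring, by ring, by ring, by ring⟩⟩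
  · intro α h
    obtain ⟨hp, -⟩ := monic_quartic_eq_X_sub_C_pow_four_iff.mp h
    linarith
end
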